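/- arXiv:2305.00413 — 8 statements merged into one kernel-verified Lean document; each statement's English description precedes it below -/
import Mathlib

section
/- Let S be a factorizable Boolean sublattice and let C be a connected component of the quarkic graph G(S). Then the Boolean sublattice ⟨V(C)⟩ generated by the vertex set of C is factorizable, and the set of quarks of ⟨V(C)⟩ equals A(S) ∩ ⟨V(C)⟩. -/
open scoped ENNReal

/-- A Boolean sublattice: a set of finite subsets of `ℕ` that contains `∅` and is
closed under binary unions (ordered by inclusion, with joins given by unions). -/
def IsBSL (S : Set (Finset ℕ)) : Prop :=
  ∅ ∈ S ∧ ∀ A ∈ S, ∀ B ∈ S, A ∪ B ∈ S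

/-- A quark of `S`: a nonempty element of `S` covering `∅` in `S`, i.e. there is no
`B ∈ S` with `∅ ⊊ B ⊊ A`. -/
def IsQuark (S : Set (Finset ℕ)) (A : Finset ℕ) : Prop :=
  A ∈ S ∧ A ≠ ∅ ∧ ∀ B ∈ S, B ≠ ∅ → ¬ B ⊂ A

/-- `z` is a factorization of `X` into quarks of `S`: a finite set of quarks whose
union is `X` such that no proper subset of `z` has union `X`. -/
def IsFactorization (S : Set (Finset ℕ)) (X : Finset ℕ) (z : Finset (Finset ℕ)) : Prop :=
  (∀ A ∈ z, IsQuark S A) ∧ z.sup id = X ∧ ∀ w, w ⊂ z → w.sup id ≠ X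

/-- The set `Z(X)` of factorizations of `X` in `S`. -/
def Factorizations (S : Set (Finset ℕ)) (X : Finset ℕ) : Set (Finset (Finset ℕ)) :=
  {z | IsFactorization S X z}

/-- `S` is factorizable: every nonempty element of `S` has a factorization. -/
def Factorizable (S : Set (Finset ℕ)) : Prop :=
  ∀ X ∈ S, X ≠ ∅ → (Factorizations S X).Nonempty

/-- `S` is a unique factorization semilattice: every nonempty element of `S` has
exactly one factorization. -/
def IsUFS (S : Set (Finset ℕ)) : Prop :=
  ∀ X ∈ S, X ≠ ∅ → ∃! z, z ∈ Factorizations S X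

/-- `S` is a half-factorial semilattice: for every nonempty `X ∈ S` the set of
factorization lengths of `X` is a singleton. -/
def IsHFS (S : Set (Finset ℕ)) : Prop :=
  ∀ X ∈ S, X ≠ ∅ → (Factorizations S X).Nonempty ∧
    ∀ z ∈ Factorizations S X, ∀ z' ∈ Factorizations S X, z.card = z'.card

/-- `S` is a length-factorial semilattice: two distinct factorizations of the same
nonempty element of `S` have different cardinalities. -/
def IsLFS (S : Set (Finset ℕ)) : Prop :=
  ∀ X ∈ S, X ≠ ∅ → ∀ z ∈ Factorizations S X, ∀ z' ∈ Factorizations S X,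
    z.card = z'.card → z = z'

/-- The Boolean sublattice generated by a collection `𝒜` of finite subsets of `ℕ`:
the smallest set of finite subsets of `ℕ` containing `{∅} ∪ 𝒜` and closed under
binary unions. -/
def genBSL (𝒜 : Set (Finset ℕ)) : Set (Finset ℕ) :=
  ⋂₀ {T | IsBSL T ∧ 𝒜 ⊆ T}

/-- An isolated quark: a quark disjoint from every other quark of `S`. -/
def IsIsolatedQuark (S : Set (Finset ℕ)) (A : Finset ℕ) : Prop :=
  IsQuark S A ∧ ∀ B, IsQuark S B → B ≠ A → Disjoint A B

/-- An excess quark: a quark each of whose elements belongs to some other quark. -/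
def IsExcessQuark (S : Set (Finset ℕ)) (A : Finset ℕ) : Prop :=
  IsQuark S A ∧ ∀ j ∈ A, ∃ B, IsQuark S B ∧ B ≠ A ∧ j ∈ B

/-- The quarkic graph of `S`: vertices are the quarks of `S`, with an edge between
distinct quarks having nonempty intersection. -/
def quarkicGraph (S : Set (Finset ℕ)) : SimpleGraph {A : Finset ℕ // IsQuark S A} :=
  SimpleGraph.fromRel (fun A B => ((A : Finset ℕ) ∩ (B : Finset ℕ)).Nonempty)

/-- The vertex set `V(C)` of a connected component of the quarkic graph, as a set of
finite subsets of `ℕ`. -/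
def compVerts (S : Set (Finset ℕ)) (C : (quarkicGraph S).ConnectedComponent) :
    Set (Finset ℕ) :=
  Subtype.val '' C.supp

/-- The pairing graph of `S` (for `S` with quarks of size at most 2): vertices are `ℕ`,
with an edge between distinct `a`, `b` whenever `{a, b}` is a quark of `S`. -/
def pairingGraph (S : Set (Finset ℕ)) : SimpleGraph ℕ :=
  SimpleGraph.fromRel (fun a b => IsQuark S {a, b})

/-- The edge set of a connected component `C` of the pairing graph, each edge `{a,b}`
regarded as the 2-element subset `{a, b}` of `ℕ`. -/
def compEdgeSets (S : Set (Finset ℕ)) (C : (pairingGraph S).ConnectedComponent) :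
    Set (Finset ℕ) :=
  {A | ∃ a b : ℕ, (pairingGraph S).Adj a b ∧ a ∈ C.supp ∧ A = {a, b}}

/-- `v` has degree at least `n` in `G` (valid also for infinite graphs). -/
def DegAtLeast {V : Type*} (G : SimpleGraph V) (v : V) (n : ℕ) : Prop :=
  ∃ s : Finset V, s.card = n ∧ ∀ u ∈ s, G.Adj v u

/-- `v` has degree exactly `n` in `G`: its neighbor set is a finite set of size `n`. -/
def DegExactly {V : Type*} (G : SimpleGraph V) (v : V) (n : ℕ) : Prop :=
  ∃ s : Finset V, s.card = n ∧ ∀ u, G.Adj v u ↔ u ∈ s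

/-- A leaf: a vertex of degree exactly 1. -/
def IsLeaf {V : Type*} (G : SimpleGraph V) (v : V) : Prop := DegExactly G v 1

/-- A candy graph: a connected simple graph of diameter at most 4 that contains a
cycle of length `k` if and only if `k = 4`. -/
def IsCandy {V : Type*} (G : SimpleGraph V) : Prop :=
  G.Connected ∧
  (∀ u v : V, ∃ p : G.Walk u v, p.length ≤ 4) ∧
  (∀ k : ℕ, (∃ (v : V) (c : G.Walk v v), c.IsCycle ∧ c.length = k) ↔ k = 4)

/-- The connected component `C` of `G` contains no cycle. -/
def CompAcyclic {V : Type*} (G : SimpleGraph V) (C : G.ConnectedComponent) : Prop :=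
  ∀ v ∈ C.supp, ∀ c : G.Walk v v, ¬ c.IsCycle

/-- Every path inside the connected component `C` has length at most `d` (for a tree
component this says its diameter is at most `d`). -/
def CompDiamLe {V : Type*} (G : SimpleGraph V) (C : G.ConnectedComponent) (d : ℕ) : Prop :=
  ∀ (u v : V), u ∈ C.supp → ∀ p : G.Walk u v, p.IsPath → p.length ≤ d

/-- The connected component `C` of `G` is (as an induced subgraph) the cycle graph on
`n` vertices. -/
def CompIsCycleGraph {V : Type*} (G : SimpleGraph V) (C : G.ConnectedComponent)
    (n : ℕ) : Prop :=
  ∃ v : Fin n → V, Function.Injective v ∧ C.supp = Set.range v ∧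
    ∀ i j : Fin n, G.Adj (v i) (v j) ↔
      ((j : ℕ) = ((i : ℕ) + 1) % n ∨ (i : ℕ) = ((j : ℕ) + 1) % n)

/-- The connected component `C` of `G` is (as an induced subgraph) a candy graph:
it has diameter at most 4 and contains a cycle of length `k` iff `k = 4`. -/
def CompIsCandy {V : Type*} (G : SimpleGraph V) (C : G.ConnectedComponent) : Prop :=
  (∀ u v, u ∈ C.supp → v ∈ C.supp → ∃ p : G.Walk u v, p.length ≤ 4) ∧
  (∀ k : ℕ, (∃ v ∈ C.supp, ∃ c : G.Walk v v, c.IsCycle ∧ c.length = k) ↔ k = 4)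

/-- The set of factorization lengths `L(X)` of `X` in `S`. -/
def lengthsOf (S : Set (Finset ℕ)) (X : Finset ℕ) : Set ℕ :=
  Finset.card '' Factorizations S X

/-- The elasticity `ρ(X) = sup L(X) / min L(X)` of a nonempty element `X` of `S`,
valued in the extended nonnegative reals. -/
noncomputable def elasticityOf (S : Set (Finset ℕ)) (X : Finset ℕ) : ℝ≥0∞ :=
  (⨆ n ∈ lengthsOf S X, (n : ℝ≥0∞)) / ((sInf (lengthsOf S X) : ℕ) : ℝ≥0∞)

/-- The elasticity `ρ(S)` of a Boolean sublattice `S`. -/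
noncomputable def elasticity (S : Set (Finset ℕ)) : ℝ≥0∞ :=
  ⨆ X ∈ {X | X ∈ S ∧ X ≠ ∅}, elasticityOf S X


/-!
Quarks of `S` are nonempty and pairwise incomparable, so any family `𝒜` of quarks is an
antichain of nonempty sets. The elements of `⟨𝒜⟩` are exactly the unions of finitely many
members of `𝒜`, so every nonempty element of `⟨𝒜⟩` contains a member of `𝒜`; for an
antichain this makes the quarks of `⟨𝒜⟩` exactly the members of `𝒜`, and also the only
quarks of `S` lying in `⟨𝒜⟩`. A minimal subfamily of generators with the same union is a
factorization.
-/

lemma genBSL_subset {𝒜 T : Set (Finset ℕ)} (hT : IsBSL T) (h : 𝒜 ⊆ T) :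
    genBSL 𝒜 ⊆ T := fun _ hA => hA T ⟨hT, h⟩

lemma subset_genBSL (𝒜 : Set (Finset ℕ)) : 𝒜 ⊆ genBSL 𝒜 :=
  fun _ hA _ hT => hT.2 hA

lemma IsBSL.sup_mem {T : Set (Finset ℕ)} (hT : IsBSL T) {z : Finset (Finset ℕ)}
    (hz : ↑z ⊆ T) : z.sup id ∈ T :=
  Finset.sup_induction hT.1 (fun _ h₁ _ h₂ => hT.2 _ h₁ _ h₂) hz

lemma isBSL_setOf_exists_sup_eq (𝒜 : Set (Finset ℕ)) :
    IsBSL {A | ∃ z : Finset (Finset ℕ), ↑z ⊆ 𝒜 ∧ z.sup id = A} := by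
  refine ⟨⟨∅, by simp, rfl⟩, ?_⟩
  rintro _ ⟨z₁, hz₁, rfl⟩ _ ⟨z₂, hz₂, rfl⟩
  exact ⟨z₁ ∪ z₂, by simpa using And.intro hz₁ hz₂, Finset.sup_union⟩

lemma mem_genBSL_iff {𝒜 : Set (Finset ℕ)} {A : Finset ℕ} :
    A ∈ genBSL 𝒜 ↔ ∃ z : Finset (Finset ℕ), ↑z ⊆ 𝒜 ∧ z.sup id = A := by
  refine ⟨fun hA => genBSL_subset (isBSL_setOf_exists_sup_eq 𝒜) ?_ hA, ?_⟩
  · exact fun B hB => ⟨{B}, by simpa using hB, by simp⟩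
  · rintro ⟨z, hz, rfl⟩
    exact fun T hT => hT.1.sup_mem (hz.trans hT.2)

lemma exists_mem_subset_of_mem_genBSL {𝒜 : Set (Finset ℕ)} {B : Finset ℕ}
    (hB : B ∈ genBSL 𝒜) (hB0 : B ≠ ∅) : ∃ A ∈ 𝒜, A ⊆ B := by
  obtain ⟨z, hz, rfl⟩ := mem_genBSL_iff.mp hB
  obtain ⟨A, hA⟩ : z.Nonempty := Finset.nonempty_iff_ne_empty.mpr (by rintro rfl; exact hB0 rfl)
  exact ⟨A, hz hA, Finset.le_sup (f := id) hA⟩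

lemma isAntichain_setOf_isQuark (S : Set (Finset ℕ)) :
    IsAntichain (· ⊆ ·) {A | IsQuark S A} :=
  fun _ hA _ hB hne hAB => hB.2.2 _ hA.1 hA.2.1 (Finset.ssubset_iff_subset_ne.mpr ⟨hAB, hne⟩)

lemma isQuark_genBSL_iff {𝒜 : Set (Finset ℕ)} (h𝒜₀ : ∅ ∉ 𝒜) (h𝒜 : IsAntichain (· ⊆ ·) 𝒜)
    {A : Finset ℕ} : IsQuark (genBSL 𝒜) A ↔ A ∈ 𝒜 := by
  constructor
  · rintro ⟨hA, hA0, hmin⟩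
    obtain ⟨B, hB, hBA⟩ := exists_mem_subset_of_mem_genBSL hA hA0
    have hB0 : B ≠ ∅ := fun h => h𝒜₀ (h ▸ hB)
    obtain rfl : B = A := by_contra fun hne =>
      hmin B (subset_genBSL 𝒜 hB) hB0 (Finset.ssubset_iff_subset_ne.mpr ⟨hBA, hne⟩)
    exact hB
  · intro hA
    refine ⟨subset_genBSL 𝒜 hA, fun h => h𝒜₀ (h ▸ hA), fun B hB hB0 hBA => ?_⟩
    obtain ⟨A', hA', hA'B⟩ := exists_mem_subset_of_mem_genBSL hB hB0
    have hA'A : A' ⊂ A := hA'B.trans_ssubset hBA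
    exact h𝒜 hA' hA hA'A.ne hA'A.subset

lemma exists_isFactorization_subset {S : Set (Finset ℕ)} {z : Finset (Finset ℕ)}
    (hz : ∀ A ∈ z, IsQuark S A) : ∃ w ⊆ z, IsFactorization S (z.sup id) w := by
  obtain ⟨w, hw⟩ := (z.powerset.filter (·.sup id = z.sup id)).exists_minimal
    ⟨z, by simp⟩
  simp only [Finset.mem_filter, Finset.mem_powerset] at hw
  refine ⟨w, hw.1.1, fun A hA => hz A (hw.1.1 hA), hw.1.2, fun v hv hveq => ?_⟩
  exact hv.not_subset (hw.2 ⟨hv.subset.trans hw.1.1, hveq⟩ hv.subset)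

lemma factorizable_genBSL {𝒜 : Set (Finset ℕ)} (h𝒜₀ : ∅ ∉ 𝒜)
    (h𝒜 : IsAntichain (· ⊆ ·) 𝒜) : Factorizable (genBSL 𝒜) := by
  intro X hX _
  obtain ⟨z, hz, rfl⟩ := mem_genBSL_iff.mp hX
  obtain ⟨w, -, hw⟩ := exists_isFactorization_subset (S := genBSL 𝒜) (z := z)
    fun A hA => (isQuark_genBSL_iff h𝒜₀ h𝒜).mpr (hz hA)
  exact ⟨w, hw⟩

lemma mem_of_mem_genBSL_of_isAntichain {𝒜 ℬ : Set (Finset ℕ)} (h𝒜ℬ : 𝒜 ⊆ ℬ)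
    (hℬ : IsAntichain (· ⊆ ·) ℬ) {A : Finset ℕ} (hA : A ∈ ℬ) (hA₀ : A ≠ ∅)
    (hA𝒜 : A ∈ genBSL 𝒜) : A ∈ 𝒜 := by
  obtain ⟨B, hB, hBA⟩ := exists_mem_subset_of_mem_genBSL hA𝒜 hA₀
  obtain rfl : B = A := by_contra fun hne => hℬ (h𝒜ℬ hB) hA hne hBA
  exact hB

theorem stmt_1_general (S : Set (Finset ℕ))
    (C : (quarkicGraph S).ConnectedComponent) :
    Factorizable (genBSL (compVerts S C)) ∧
    {A | IsQuark (genBSL (compVerts S C)) A} =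
      {A | IsQuark S A} ∩ genBSL (compVerts S C) := by
  have hquark : compVerts S C ⊆ {A | IsQuark S A} := by
    rintro _ ⟨⟨A, hA⟩, -, rfl⟩
    exact hA
  have h₀ : ∅ ∉ compVerts S C := fun h => (hquark h).2.1 rfl
  have hanti := (isAntichain_setOf_isQuark S).subset hquark
  refine ⟨factorizable_genBSL h₀ hanti, Set.ext fun A => ?_⟩
  refine (isQuark_genBSL_iff h₀ hanti).trans ⟨fun hA => ⟨hquark hA, subset_genBSL _ hA⟩, ?_⟩
  rintro ⟨hA, hAgen⟩
  exact mem_of_mem_genBSL_of_isAntichain hquark (isAntichain_setOf_isQuark S) hA hA.2.1 hAgen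

/-- For a factorizable Boolean sublattice `S` and a connected component `C`
of the quarkic graph, `⟨V(C)⟩` is factorizable and its set of quarks is
`A(S) ∩ ⟨V(C)⟩`. -/
theorem stmt_1 (S : Set (Finset ℕ)) (hS : IsBSL S) (hfac : Factorizable S)
    (C : (quarkicGraph S).ConnectedComponent) :
    Factorizable (genBSL (compVerts S C)) ∧
    {A | IsQuark (genBSL (compVerts S C)) A} =
      {A | IsQuark S A} ∩ genBSL (compVerts S C) :=
  stmt_1_general S C
end

section
/- Let S be a factorizable Boolean sublattice. For each nonempty X ∈ S there exist unique finitely many distinct connected components C₁, …, C_k of the quarkic graph G(S) and unique nonempty sets X₁ ∈ ⟨V(C₁)⟩, …, X_k ∈ ⟨V(C_k)⟩ such that X is the disjoint union X = X₁ ⊔ ⋯ ⊔ X_k. -/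
open scoped ENNReal

open Classical in
lemma genBSL_mem_exists {𝒜 : Set (Finset ℕ)} {Y : Finset ℕ} (hY : Y ∈ genBSL 𝒜) :
    ∀ n ∈ Y, ∃ A ∈ 𝒜, n ∈ A := by
  have : Y ∈ {Z : Finset ℕ | ∀ n ∈ Z, ∃ A ∈ 𝒜, n ∈ A} := by
    refine hY _ ⟨⟨by simp, ?_⟩, fun A hA => fun n hn => ⟨A, hA, hn⟩⟩
    intro A hA B hB n hn
    rcases Finset.mem_union.1 hn with h | h
    · exact hA n h
    · exact hB n h
  exact this

lemma isBSL_genBSL (𝒜 : Set (Finset ℕ)) : IsBSL (genBSL 𝒜) := by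
  constructor
  · intro T hT; exact hT.1.1
  · intro A hA B hB T hT
    exact hT.1.2 A (hA T hT) B (hB T hT)

lemma sup_mem_BSL {T : Set (Finset ℕ)} (hT : IsBSL T) (w : Finset (Finset ℕ))
    (hw : ∀ A ∈ w, A ∈ T) : w.sup id ∈ T := by
  induction w using Finset.induction_on with
  | empty => simpa using hT.1
  | @insert A s hAs ih =>
    rw [Finset.sup_insert]
    exact hT.2 A (hw A (Finset.mem_insert_self A s)) _
      (ih fun B hB => hw B (Finset.mem_insert_of_mem hB))

/-- Two quarks meeting in a point lie in the same connected component. -/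
lemma same_comp {S : Set (Finset ℕ)} (v w : {A : Finset ℕ // IsQuark S A})
    {n : ℕ} (hv : n ∈ (v : Finset ℕ)) (hw : n ∈ (w : Finset ℕ)) :
    (quarkicGraph S).connectedComponentMk v = (quarkicGraph S).connectedComponentMk w := by
  by_cases hvw : v = w
  · rw [hvw]
  · have hadj : (quarkicGraph S).Adj v w := by
      refine ⟨hvw, Or.inl ⟨n, Finset.mem_inter.2 ⟨hv, hw⟩⟩⟩
    exact SimpleGraph.ConnectedComponent.sound hadj.reachable

/-- For a factorizable Boolean sublattice `S` and nonempty `X ∈ S`, there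
is a unique decomposition of `X` as a disjoint union of nonempty elements, one from
`⟨V(C)⟩` for each connected component `C` in a (unique) finite set of connected
components of the quarkic graph; encoded as a unique function `φ` assigning to each
component an element of `⟨V(C)⟩`, with finite support, pairwise disjoint values, whose
union is `X`. -/

theorem stmt_2 (S : Set (Finset ℕ)) (hS : IsBSL S) (hfac : Factorizable S)
    (X : Finset ℕ) (hX : X ∈ S) (hXne : X ≠ ∅) :
    ∃! φ : (quarkicGraph S).ConnectedComponent → Finset ℕ,
      (∀ C, φ C ∈ genBSL (compVerts S C)) ∧
      {C | φ C ≠ ∅}.Finite ∧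
      (∀ C C', C ≠ C' → Disjoint (φ C) (φ C')) ∧
      (∀ n : ℕ, n ∈ X ↔ ∃ C, n ∈ φ C) := by
  classical
  obtain ⟨z, hzq, hzsup, -⟩ := hfac X hX hXne
  set G := quarkicGraph S
  -- the canonical candidate
  set P : G.ConnectedComponent → ℕ → Prop :=
    fun C n => ∃ v : {A : Finset ℕ // IsQuark S A},
      G.connectedComponentMk v = C ∧ n ∈ (v : Finset ℕ) with hP
  set φ : G.ConnectedComponent → Finset ℕ := fun C => X.filter (P C) with hφ
  -- members of X lie in some quark of z
  have hmemz : ∀ n ∈ X, ∃ A ∈ z, n ∈ A := by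
    intro n hn
    rw [← hzsup] at hn
    rcases Finset.mem_sup.1 hn with ⟨A, hA, hnA⟩
    exact ⟨A, hA, hnA⟩
  -- φ C equals the union of quarks of z in component C
  have hφ_eq : ∀ C, φ C =
      (z.filter (fun A => ∃ h : IsQuark S A, G.connectedComponentMk ⟨A, h⟩ = C)).sup id := by
    intro C
    apply Finset.ext
    intro n
    simp only [hφ, Finset.mem_filter, Finset.mem_sup, id]
    constructor
    · rintro ⟨hnX, v, hvC, hnv⟩
      obtain ⟨A, hAz, hnA⟩ := hmemz n hnX
      have hAq : IsQuark S A := hzq A hAz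
      refine ⟨A, ⟨hAz, hAq, ?_⟩, hnA⟩
      rw [← hvC]
      exact same_comp ⟨A, hAq⟩ v hnA hnv
    · rintro ⟨A, ⟨hAz, hAq, hAC⟩, hnA⟩
      have hnX : n ∈ X := by
        rw [← hzsup]; exact Finset.mem_sup.2 ⟨A, hAz, hnA⟩
      exact ⟨hnX, ⟨A, hAq⟩, hAC, hnA⟩
  -- φ satisfies all four conditions
  have hcond1 : ∀ C, φ C ∈ genBSL (compVerts S C) := by
    intro C
    rw [hφ_eq C]
    apply sup_mem_BSL (isBSL_genBSL _)
    intro A hA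
    rcases Finset.mem_filter.1 hA with ⟨hAz, hAq, hAC⟩
    apply subset_genBSL
    exact ⟨⟨A, hAq⟩, by simpa [SimpleGraph.ConnectedComponent.mem_supp_iff] using hAC, rfl⟩
  have hcond2 : {C | φ C ≠ ∅}.Finite := by
    have hfin : (Subtype.val ⁻¹' (↑z : Set (Finset ℕ)) :
        Set {A : Finset ℕ // IsQuark S A}).Finite :=
      z.finite_toSet.preimage (Set.injOn_of_injective Subtype.val_injective)
    refine Set.Finite.subset (hfin.image (G.connectedComponentMk)) ?_
    intro C hC
    rw [Set.mem_setOf_eq, hφ_eq C] at hC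
    have : (z.filter (fun A => ∃ h : IsQuark S A, G.connectedComponentMk ⟨A, h⟩ = C)).Nonempty := by
      by_contra hne
      rw [Finset.not_nonempty_iff_eq_empty] at hne
      rw [hne] at hC
      simp at hC
    obtain ⟨A, hA⟩ := this
    rcases Finset.mem_filter.1 hA with ⟨hAz, hAq, hAC⟩
    exact ⟨⟨A, hAq⟩, by simpa using hAz, hAC⟩
  have hcond3 : ∀ C C', C ≠ C' → Disjoint (φ C) (φ C') := by
    intro C C' hne
    rw [Finset.disjoint_left]
    intro n hn hn'
    rcases Finset.mem_filter.1 hn with ⟨-, v, hvC, hnv⟩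
    rcases Finset.mem_filter.1 hn' with ⟨-, w, hwC, hnw⟩
    exact hne (hvC ▸ hwC ▸ same_comp v w hnv hnw)
  have hcond4 : ∀ n : ℕ, n ∈ X ↔ ∃ C, n ∈ φ C := by
    intro n
    constructor
    · intro hn
      obtain ⟨A, hAz, hnA⟩ := hmemz n hn
      have hAq : IsQuark S A := hzq A hAz
      exact ⟨G.connectedComponentMk ⟨A, hAq⟩,
        Finset.mem_filter.2 ⟨hn, ⟨A, hAq⟩, rfl, hnA⟩⟩
    · rintro ⟨C, hC⟩
      exact (Finset.mem_filter.1 hC).1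
  refine ⟨φ, ⟨hcond1, hcond2, hcond3, hcond4⟩, ?_⟩
  -- uniqueness
  rintro ψ ⟨hψ1, -, hψ3, hψ4⟩
  funext C
  apply Finset.ext
  intro n
  simp only [hφ, Finset.mem_filter]
  constructor
  · intro hn
    have hnX : n ∈ X := (hψ4 n).2 ⟨C, hn⟩
    obtain ⟨B, hB, hnB⟩ := genBSL_mem_exists (hψ1 C) n hn
    rcases hB with ⟨v, hv, rfl⟩
    exact ⟨hnX, v, (SimpleGraph.ConnectedComponent.mem_supp_iff _ _).1 hv, hnB⟩
  · rintro ⟨hnX, v, hvC, hnv⟩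
    obtain ⟨C', hC'⟩ := (hψ4 n).1 hnX
    obtain ⟨B, hB, hnB⟩ := genBSL_mem_exists (hψ1 C') n hC'
    rcases hB with ⟨w, hw, rfl⟩
    have : C = C' := by
      rw [← hvC, ← (SimpleGraph.ConnectedComponent.mem_supp_iff _ _).1 hw]
      exact same_comp v w hnv hnB
    rwa [this]
end

section
/- Let S be a factorizable Boolean sublattice, let X ∈ S be nonempty, and let X = X₁ ⊔ ⋯ ⊔ X_k be its unique decomposition with X_i a nonempty element of ⟨V(C_i)⟩ for distinct connected components C₁, …, C_k of the quarkic graph G(S). Then the map from Z_S(X) to Z_{⟨V(C₁)⟩}(X₁) × ⋯ × Z_{⟨V(C_k)⟩}(X_k) sending a factorization z to (z₁, …, z_k), where z_i := {A ∈ z : A ⊆ X_i}, is a bijection. -/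
open scoped ENNReal

section Helpers

lemma exists_sup_of_mem_genBSL {𝒜 : Set (Finset ℕ)} {X : Finset ℕ}
    (hX : X ∈ genBSL 𝒜) :
    X = ∅ ∨ ∃ t : Finset (Finset ℕ), ↑t ⊆ 𝒜 ∧ t.sup id = X := by
  classical
  have hBSL : IsBSL {A | A = ∅ ∨ ∃ t : Finset (Finset ℕ), ↑t ⊆ 𝒜 ∧ t.sup id = A} := by
    constructor
    · exact Or.inl rfl
    · rintro A (rfl | ⟨tA, htA, rfl⟩) B hB
      · simpa using hB
      · rcases hB with rfl | ⟨tB, htB, rfl⟩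
        · exact Or.inr ⟨tA, htA, by simp⟩
        · refine Or.inr ⟨tA ∪ tB, ?_, ?_⟩
          · rw [Finset.coe_union]; exact Set.union_subset htA htB
          · rw [Finset.sup_union]; rfl
  have hsub : 𝒜 ⊆ {A | A = ∅ ∨ ∃ t : Finset (Finset ℕ), ↑t ⊆ 𝒜 ∧ t.sup id = A} := by
    intro A hA
    exact Or.inr ⟨{A}, by simpa using hA, by simp⟩
  exact genBSL_subset hBSL hsub hX

lemma mem_compVerts_iff {S : Set (Finset ℕ)} {C : (quarkicGraph S).ConnectedComponent}
    {A : Finset ℕ} :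
    A ∈ compVerts S C ↔ ∃ h : IsQuark S A, (quarkicGraph S).connectedComponentMk ⟨A, h⟩ = C := by
  constructor
  · rintro ⟨⟨B, hB⟩, hsupp, rfl⟩
    exact ⟨hB, by simpa [SimpleGraph.ConnectedComponent.mem_supp_iff] using hsupp⟩
  · rintro ⟨h, hC⟩
    exact ⟨⟨A, h⟩, by simpa [SimpleGraph.ConnectedComponent.mem_supp_iff] using hC, rfl⟩

lemma compVerts_subset {S : Set (Finset ℕ)} {C : (quarkicGraph S).ConnectedComponent} :
    compVerts S C ⊆ S := by
  intro A hA
  rcases mem_compVerts_iff.mp hA with ⟨h, -⟩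
  exact h.1

/-- Distinct quarks in different connected components are disjoint. -/
lemma disjoint_of_ne_comp {S : Set (Finset ℕ)} {A B : Finset ℕ}
    (hA : IsQuark S A) (hB : IsQuark S B)
    (h : (quarkicGraph S).connectedComponentMk ⟨A, hA⟩ ≠
         (quarkicGraph S).connectedComponentMk ⟨B, hB⟩) :
    Disjoint A B := by
  by_contra hd
  rcases Finset.not_disjoint_iff.mp hd with ⟨x, hxA, hxB⟩
  by_cases hAB : A = B
  · subst hAB; exact h rfl
  · have hadj : (quarkicGraph S).Adj ⟨A, hA⟩ ⟨B, hB⟩ := by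
      rw [quarkicGraph, SimpleGraph.fromRel_adj]
      exact ⟨by simpa using hAB, Or.inl ⟨x, Finset.mem_inter.mpr ⟨hxA, hxB⟩⟩⟩
    exact h (SimpleGraph.ConnectedComponent.sound hadj.reachable)

/-- The quarks of the sublattice generated by the quarks in a component `C` are
exactly the quarks of `S` belonging to `C`. -/
lemma isQuark_genBSL_iff_s3 {S : Set (Finset ℕ)} (hS : IsBSL S)
    {C : (quarkicGraph S).ConnectedComponent} {A : Finset ℕ} :
    IsQuark (genBSL (compVerts S C)) A ↔ IsQuark S A ∧ A ∈ compVerts S C := by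
  constructor
  · rintro ⟨hmem, hne, hmin⟩
    rcases exists_sup_of_mem_genBSL hmem with rfl | ⟨t, ht𝒜, hsup⟩
    · exact absurd rfl hne
    · rcases Finset.nonempty_iff_ne_empty.mpr hne with ⟨x, hx⟩
      rw [← hsup] at hx
      rcases Finset.mem_sup.mp hx with ⟨Q, hQt, hxQ⟩
      have hQ𝒜 : Q ∈ compVerts S C := ht𝒜 hQt
      have hQA : Q ⊆ A := by
        rw [← hsup]; exact Finset.le_sup (f := id) hQt
      rcases mem_compVerts_iff.mp hQ𝒜 with ⟨hQq, -⟩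
      have hQA' : Q = A := by
        by_contra hne'
        exact hmin Q (subset_genBSL _ hQ𝒜) hQq.2.1 (Finset.ssubset_iff_subset_ne.mpr ⟨hQA, hne'⟩)
      subst hQA'
      exact ⟨hQq, hQ𝒜⟩
  · rintro ⟨hq, hmem⟩
    refine ⟨subset_genBSL _ hmem, hq.2.1, ?_⟩
    intro B hB hBne
    exact hq.2.2 B (genBSL_subset hS compVerts_subset hB) hBne

end Helpers

/-- With `X = X₁ ⊔ ⋯ ⊔ X_k` the unique decomposition of `X` along the
connected components of the quarkic graph (encoded by `φ`, where `φ C` is the part of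
`X` in `⟨V(C)⟩`), the map `z ↦ (C ↦ {A ∈ z : A ⊆ φ C})` is a bijection from `Z_S(X)`
onto the set of tuples of factorizations of the parts. -/
theorem stmt_3 (S : Set (Finset ℕ)) (hS : IsBSL S) (hfac : Factorizable S)
    (X : Finset ℕ) (hX : X ∈ S) (hXne : X ≠ ∅)
    (φ : (quarkicGraph S).ConnectedComponent → Finset ℕ)
    (hφmem : ∀ C, φ C ∈ genBSL (compVerts S C))
    (hφfin : {C | φ C ≠ ∅}.Finite)
    (hφdisj : ∀ C C', C ≠ C' → Disjoint (φ C) (φ C'))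
    (hφunion : ∀ n : ℕ, n ∈ X ↔ ∃ C, n ∈ φ C) :
    Set.BijOn
      (fun (z : Finset (Finset ℕ)) (C : (quarkicGraph S).ConnectedComponent) =>
        z.filter (fun A => A ⊆ φ C))
      (Factorizations S X)
      {g | ∀ C, g C ∈ Factorizations (genBSL (compVerts S C)) (φ C)} := by
  classical
  -- basic facts about the parts φ C
  have hφS : ∀ C, φ C ∈ S := fun C =>
    genBSL_subset hS compVerts_subset (hφmem C)
  have hφsubX : ∀ C, φ C ⊆ X := fun C x hx => (hφunion x).mpr ⟨C, hx⟩
  -- every point of φ C lies in a quark of component C contained in φ C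
  have hcover : ∀ C, ∀ x ∈ φ C, ∃ Q, Q ∈ compVerts S C ∧ x ∈ Q ∧ Q ⊆ φ C := by
    intro C x hx
    rcases exists_sup_of_mem_genBSL (hφmem C) with h0 | ⟨t, ht𝒜, hsup⟩
    · rw [h0] at hx; exact absurd hx (Finset.notMem_empty x)
    · rw [← hsup] at hx
      rcases Finset.mem_sup.mp hx with ⟨Q, hQt, hxQ⟩
      exact ⟨Q, ht𝒜 hQt, hxQ, by rw [← hsup]; exact Finset.le_sup (f := id) hQt⟩
  -- a quark contained in X is contained in the part of its own component
  have hquarkpart : ∀ A (hA : IsQuark S A), A ⊆ X →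
      A ⊆ φ ((quarkicGraph S).connectedComponentMk ⟨A, hA⟩) := by
    intro A hA hAX x hxA
    rcases (hφunion x).mp (hAX hxA) with ⟨C, hxC⟩
    rcases hcover C x hxC with ⟨Q, hQ𝒜, hxQ, -⟩
    rcases mem_compVerts_iff.mp hQ𝒜 with ⟨hQq, hQC⟩
    have : (quarkicGraph S).connectedComponentMk ⟨A, hA⟩ = C := by
      by_contra hne
      rw [← hQC] at hne
      exact (Finset.disjoint_left.mp (disjoint_of_ne_comp hA hQq hne) hxA) hxQ
    rw [this]; exact hxC
  -- uniqueness of the part containing a nonempty set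
  have huniq : ∀ (A : Finset ℕ), A ≠ ∅ → ∀ C C', A ⊆ φ C → A ⊆ φ C' → C = C' := by
    intro A hAne C C' h1 h2
    by_contra hne
    rcases Finset.nonempty_iff_ne_empty.mpr hAne with ⟨x, hx⟩
    exact Finset.disjoint_left.mp (hφdisj C C' hne) (h1 hx) (h2 hx)
  -- MapsTo
  have hmaps : ∀ z ∈ Factorizations S X,
      ∀ C, z.filter (fun A => A ⊆ φ C) ∈ Factorizations (genBSL (compVerts S C)) (φ C) := by
    intro z hz C
    obtain ⟨hzq, hzsup, hzmin⟩ := hz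
    have hsubX : ∀ A ∈ z, A ⊆ X := by
      intro A hA; rw [← hzsup]; exact Finset.le_sup (f := id) hA
    -- each quark of z sits inside exactly one part
    have hcompsub : ∀ A ∈ z, A ⊆ φ C → A ∈ compVerts S C := by
      intro A hA hAC
      have hq := hzq A hA
      have h1 := hquarkpart A hq (hsubX A hA)
      have := huniq A hq.2.1 _ _ h1 hAC
      exact mem_compVerts_iff.mpr ⟨hq, this⟩
    have hsupC : (z.filter (fun A => A ⊆ φ C)).sup id = φ C := by
      apply le_antisymm
      · exact Finset.sup_le fun A hA => (Finset.mem_filter.mp hA).2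
      · intro x hx
        have hxX : x ∈ X := hφsubX C hx
        rw [← hzsup] at hxX
        rcases Finset.mem_sup.mp hxX with ⟨A, hAz, hxA⟩
        have hq := hzq A hAz
        have h1 := hquarkpart A hq (hsubX A hAz)
        have hCeq : (quarkicGraph S).connectedComponentMk ⟨A, hq⟩ = C := by
          by_contra hne
          exact Finset.disjoint_left.mp (hφdisj _ C hne) (h1 hxA) hx
        rw [hCeq] at h1
        exact Finset.mem_sup.mpr ⟨A, Finset.mem_filter.mpr ⟨hAz, h1⟩, hxA⟩
    refine ⟨?_, hsupC, ?_⟩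
    · intro A hA
      rcases Finset.mem_filter.mp hA with ⟨hAz, hAC⟩
      exact (isQuark_genBSL_iff_s3 hS).mpr ⟨hzq A hAz, hcompsub A hAz hAC⟩
    · intro w hw hwsup
      rcases Finset.exists_of_ssubset hw with ⟨A, hAf, hAw⟩
      have hwz : w ⊆ z := hw.subset.trans (Finset.filter_subset _ _)
      refine hzmin (w ∪ (z \ z.filter (fun A => A ⊆ φ C))) ?_ ?_
      · refine Finset.ssubset_iff_subset_ne.mpr ⟨?_, ?_⟩
        · exact Finset.union_subset hwz (Finset.sdiff_subset)
        · intro heq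
          have hAz : A ∈ z := (Finset.filter_subset _ _) hAf
          rw [← heq] at hAz
          rcases Finset.mem_union.mp hAz with h | h
          · exact hAw h
          · exact (Finset.mem_sdiff.mp h).2 hAf
      · apply le_antisymm
        · rw [← hzsup]
          exact Finset.sup_mono (Finset.union_subset hwz Finset.sdiff_subset)
        · intro x hxX
          rw [← hzsup] at hxX
          rcases Finset.mem_sup.mp hxX with ⟨B, hBz, hxB⟩
          by_cases hBf : B ∈ z.filter (fun A => A ⊆ φ C)
          · have hx : x ∈ φ C := (Finset.mem_filter.mp hBf).2 hxB
            rw [← hwsup] at hx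
            rcases Finset.mem_sup.mp hx with ⟨B', hB'w, hxB'⟩
            exact Finset.mem_sup.mpr ⟨B', Finset.mem_union_left _ hB'w, hxB'⟩
          · exact Finset.mem_sup.mpr ⟨B, Finset.mem_union_right _
              (Finset.mem_sdiff.mpr ⟨hBz, hBf⟩), hxB⟩
  constructor
  · exact fun z hz => hmaps z hz
  constructor
  -- injectivity
  · intro z hz z' hz' heq
    have key : ∀ (y : Finset (Finset ℕ)), y ∈ Factorizations S X → ∀ A ∈ y,
        ∃ C, A ⊆ φ C := by
      intro y hy A hA
      have hq := hy.1 A hA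
      have hAX : A ⊆ X := by rw [← hy.2.1]; exact Finset.le_sup (f := id) hA
      exact ⟨_, hquarkpart A hq hAX⟩
    apply Finset.Subset.antisymm
    · intro A hA
      rcases key z hz A hA with ⟨C, hC⟩
      have : A ∈ z.filter (fun A => A ⊆ φ C) := Finset.mem_filter.mpr ⟨hA, hC⟩
      rw [show z.filter (fun A => A ⊆ φ C) = z'.filter (fun A => A ⊆ φ C) from congrFun heq C] at this
      exact (Finset.mem_filter.mp this).1
    · intro A hA
      rcases key z' hz' A hA with ⟨C, hC⟩
      have : A ∈ z'.filter (fun A => A ⊆ φ C) := Finset.mem_filter.mpr ⟨hA, hC⟩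
      rw [← show z.filter (fun A => A ⊆ φ C) = z'.filter (fun A => A ⊆ φ C) from congrFun heq C] at this
      exact (Finset.mem_filter.mp this).1
  -- surjectivity
  · intro g hg
    simp only [Set.mem_setOf_eq] at hg
    set z : Finset (Finset ℕ) := hφfin.toFinset.biUnion g with hzdef
    have hmemz : ∀ A, A ∈ z ↔ ∃ C, φ C ≠ ∅ ∧ A ∈ g C := by
      intro A
      simp only [hzdef, Finset.mem_biUnion, Set.Finite.mem_toFinset, Set.mem_setOf_eq]
    -- facts about each g C
    have hgq : ∀ C, ∀ A ∈ g C, IsQuark S A ∧ A ∈ compVerts S C := by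
      intro C A hA
      exact (isQuark_genBSL_iff_s3 hS).mp ((hg C).1 A hA)
    have hgsub : ∀ C, ∀ A ∈ g C, A ⊆ φ C := by
      intro C A hA
      rw [← (hg C).2.1]; exact Finset.le_sup (f := id) hA
    have hfilter : ∀ C, z.filter (fun A => A ⊆ φ C) = g C := by
      intro C
      apply Finset.Subset.antisymm
      · intro A hA
        rcases Finset.mem_filter.mp hA with ⟨hAz, hAC⟩
        rcases (hmemz A).mp hAz with ⟨C', -, hAg⟩
        have hq := hgq C' A hAg
        have := huniq A hq.1.2.1 C' C (hgsub C' A hAg) hAC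
        rwa [← this]
      · intro A hA
        have hAC := hgsub C A hA
        have hq := hgq C A hA
        have hCne : φ C ≠ ∅ := by
          intro h0
          rcases Finset.nonempty_iff_ne_empty.mpr hq.1.2.1 with ⟨x, hx⟩
          rw [h0] at hAC
          exact Finset.notMem_empty x (hAC hx)
        exact Finset.mem_filter.mpr ⟨(hmemz A).mpr ⟨C, hCne, hA⟩, hAC⟩
    refine ⟨z, ⟨?_, ?_, ?_⟩, funext hfilter⟩
    · intro A hA
      rcases (hmemz A).mp hA with ⟨C, -, hAg⟩
      exact (hgq C A hAg).1
    · apply le_antisymm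
      · apply Finset.sup_le
        intro A hA
        rcases (hmemz A).mp hA with ⟨C, -, hAg⟩
        exact (hgsub C A hAg).trans (hφsubX C)
      · intro x hx
        rcases (hφunion x).mp hx with ⟨C, hxC⟩
        have : x ∈ (g C).sup id := by rw [(hg C).2.1]; exact hxC
        rcases Finset.mem_sup.mp this with ⟨A, hAg, hxA⟩
        have hCne : φ C ≠ ∅ := fun h0 => by rw [h0] at hxC; exact Finset.notMem_empty x hxC
        exact Finset.mem_sup.mpr ⟨A, (hmemz A).mpr ⟨C, hCne, hAg⟩, hxA⟩
    · intro w hw hwsup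
      rcases Finset.exists_of_ssubset hw with ⟨A, hAz, hAw⟩
      rcases (hmemz A).mp hAz with ⟨C, hCne, hAg⟩
      -- the restriction of w to φ C is a proper subset of g C with full sup
      have hwC : w.filter (fun A => A ⊆ φ C) ⊂ g C := by
        refine Finset.ssubset_iff_subset_ne.mpr ⟨?_, ?_⟩
        · rw [← hfilter C]
          exact Finset.filter_subset_filter _ hw.subset
        · intro heq
          have : A ∈ w.filter (fun A => A ⊆ φ C) := by
            rw [heq]; exact hAg
          exact hAw (Finset.mem_filter.mp this).1
      have hwCsup : (w.filter (fun A => A ⊆ φ C)).sup id = φ C := by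
        apply le_antisymm
        · exact Finset.sup_le fun B hB => (Finset.mem_filter.mp hB).2
        · intro x hxC
          have hxX : x ∈ X := hφsubX C hxC
          rw [← hwsup] at hxX
          rcases Finset.mem_sup.mp hxX with ⟨B, hBw, hxB⟩
          rcases (hmemz B).mp (hw.subset hBw) with ⟨C', -, hBg⟩
          have hBC' := hgsub C' B hBg
          have hCeq : C' = C := by
            by_contra hne
            exact Finset.disjoint_left.mp (hφdisj C' C hne) (hBC' hxB) hxC
          rw [hCeq] at hBC'
          exact Finset.mem_sup.mpr ⟨B, Finset.mem_filter.mpr ⟨hBw, hBC'⟩, hxB⟩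
      exact (hg C).2.2 _ hwC hwCsup
end

section
/- Let S be a factorizable Boolean sublattice, let X ∈ S be nonempty, and let A be an isolated quark of S with A ⊄ X (i.e., not A ⊆ X). Then the set of factorizations of X ∪ A in S equals { z ∪ {A} : z ∈ Z(X) }. -/
open scoped ENNReal

/-- For a factorizable Boolean sublattice `S`, nonempty `X ∈ S`, and an
isolated quark `A` of `S` with `¬ A ⊆ X`, the factorizations of `X ∪ A` are exactly
the sets `z ∪ {A}` for `z` a factorization of `X`. -/
theorem stmt_4 (S : Set (Finset ℕ)) (hS : IsBSL S) (hfac : Factorizable S)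
    (X : Finset ℕ) (hX : X ∈ S) (hXne : X ≠ ∅)
    (A : Finset ℕ) (hA : IsIsolatedQuark S A) (hAX : ¬ A ⊆ X) :
    Factorizations S (X ∪ A) = (fun z => insert A z) '' Factorizations S X := by
  obtain ⟨⟨hAS, hAne, hAmin⟩, hiso⟩ := hA
  -- A is disjoint from X
  have hdisj : Disjoint A X := by
    obtain ⟨z₀, hz₀q, hz₀sup, hz₀min⟩ := hfac X hX hXne
    rw [← hz₀sup, Finset.disjoint_sup_right]
    intro B hB
    refine hiso B (hz₀q B hB) ?_
    rintro rfl
    exact hAX (hz₀sup ▸ Finset.le_sup (f := id) hB)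
  obtain ⟨a, haA, haX⟩ := Finset.not_subset.mp hAX
  ext y
  constructor
  · rintro ⟨hyq, hysup, hymin⟩
    -- A ∈ y
    have hAy : A ∈ y := by
      have hay : a ∈ y.sup id := by
        rw [hysup]; exact Finset.mem_union_right _ haA
      obtain ⟨B, hBy, haB⟩ := Finset.mem_sup.mp hay
      have hBA : B = A := by
        by_contra hne
        exact Finset.disjoint_left.mp
          ((hiso B (hyq B hBy) hne).symm) haB haA
      exact hBA ▸ hBy
    set z := y.erase A with hz
    have hzsub : z ⊆ y := Finset.erase_subset _ _
    have hzne : ∀ B ∈ z, B ≠ A := fun B hB => Finset.ne_of_mem_erase hB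
    have hy : y = insert A z := (Finset.insert_erase hAy).symm
    have hzd : Disjoint A (z.sup id) := by
      rw [Finset.disjoint_sup_right]
      exact fun B hB => hiso B (hyq B (hzsub hB)) (hzne B hB)
    have hysup' : A ∪ z.sup id = X ∪ A := by
      rw [← hysup, hy, Finset.sup_insert]; rfl
    have hzsup : z.sup id = X := by
      apply Finset.Subset.antisymm
      · intro x hx
        have hxXA : x ∈ X ∪ A := by rw [← hysup']; exact Finset.mem_union_right _ hx
        rcases Finset.mem_union.mp hxXA with h | h
        · exact h
        · exact absurd hx (Finset.disjoint_left.mp hzd h)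
      · intro x hx
        have hxA : x ∉ A := Finset.disjoint_right.mp hdisj hx
        have : x ∈ A ∪ z.sup id := by
          rw [hysup']; exact Finset.mem_union_left _ hx
        rcases Finset.mem_union.mp this with h | h
        · exact absurd h hxA
        · exact h
    refine ⟨z, ⟨fun B hB => hyq B (hzsub hB), hzsup, ?_⟩, hy.symm⟩
    intro w hw hwsup
    have hAw : A ∉ w := fun h => hzne A (hw.1 h) rfl
    have hsub : insert A w ⊂ y := by
      rw [hy]
      refine Finset.ssubset_iff_of_subset (Finset.insert_subset_insert _ hw.1)
        |>.mpr ?_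
      obtain ⟨B, hBz, hBw⟩ := Finset.exists_of_ssubset hw
      exact ⟨B, Finset.mem_insert_of_mem hBz,
        fun h => (Finset.mem_insert.mp h).elim (fun h' => hzne B hBz h')
          hBw⟩
    refine hymin _ hsub ?_
    rw [Finset.sup_insert, show id A = A from rfl, hwsup, Finset.union_comm]
    rfl
  · rintro ⟨z, ⟨hzq, hzsup, hzmin⟩, rfl⟩
    have hAz : A ∉ z := fun h => hAX (hzsup ▸ Finset.le_sup (f := id) h)
    have hzne : ∀ B ∈ z, B ≠ A := fun B hB h => hAz (h ▸ hB)
    refine ⟨fun B hB => (Finset.mem_insert.mp hB).elim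
        (fun h => h ▸ ⟨hAS, hAne, hAmin⟩) (hzq B), ?_, ?_⟩
    · rw [Finset.sup_insert, show id A = A from rfl, hzsup, Finset.union_comm]
      rfl
    · intro w hw hwsup
      have hAw : A ∈ w := by
        have hay : a ∈ w.sup id := by
          rw [hwsup]; exact Finset.mem_union_right _ haA
        obtain ⟨B, hBw, haB⟩ := Finset.mem_sup.mp hay
        rcases Finset.mem_insert.mp (hw.1 hBw) with h | h
        · exact h ▸ hBw
        · exact absurd (hzsup ▸ Finset.le_sup (f := id) h haB) haX
      set w' := w.erase A with hw'
      have hw'z : w' ⊆ z := by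
        intro B hB
        rcases Finset.mem_insert.mp (hw.1 (Finset.erase_subset _ _ hB)) with h | h
        · exact absurd h (Finset.ne_of_mem_erase hB)
        · exact h
      have hw'ss : w' ⊂ z := by
        refine Finset.ssubset_iff_of_subset hw'z |>.mpr ?_
        obtain ⟨B, hBy, hBw⟩ := Finset.exists_of_ssubset hw
        rcases Finset.mem_insert.mp hBy with h | h
        · exact absurd (h ▸ hAw) hBw
        · exact ⟨B, h, fun hc => hBw (Finset.erase_subset _ _ hc)⟩
      have hw'd : Disjoint A (w'.sup id) := by
        rw [Finset.disjoint_sup_right]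
        exact fun B hB => hiso B (hzq B (hw'z hB)) (hzne B (hw'z hB))
      have hwsup' : A ∪ w'.sup id = X ∪ A := by
        rw [← hwsup, ← Finset.insert_erase hAw, Finset.sup_insert]; rfl
      refine hzmin w' hw'ss ?_
      apply Finset.Subset.antisymm
      · intro x hx
        have hxXA : x ∈ X ∪ A := by rw [← hwsup']; exact Finset.mem_union_right _ hx
        rcases Finset.mem_union.mp hxXA with h | h
        · exact h
        · exact absurd hx (Finset.disjoint_left.mp hw'd h)
      · intro x hx
        have hxA : x ∉ A := Finset.disjoint_right.mp hdisj hx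
        have : x ∈ A ∪ w'.sup id := by
          rw [hwsup']; exact Finset.mem_union_left _ hx
        rcases Finset.mem_union.mp this with h | h
        · exact absurd h hxA
        · exact h
end

section
/- Let S be a factorizable Boolean sublattice and let 𝒞 be the set of connected components of the quarkic graph G(S). Then S is a UFS if and only if ⟨V(C)⟩ is a UFS for every C ∈ 𝒞. -/
open scoped ENNReal

section Aux

/-- Characterization of membership in `genBSL`. -/
lemma genBSL_mem_iff (𝒜 : Set (Finset ℕ)) (X : Finset ℕ) :
    X ∈ genBSL 𝒜 ↔ ∃ t : Finset (Finset ℕ), ↑t ⊆ 𝒜 ∧ t.sup id = X := by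
  constructor
  · intro hX
    refine hX {X | ∃ t : Finset (Finset ℕ), ↑t ⊆ 𝒜 ∧ t.sup id = X} ⟨⟨⟨∅, by simp⟩, ?_⟩, ?_⟩
    · rintro A ⟨t, ht, rfl⟩ B ⟨t', ht', rfl⟩
      refine ⟨t ∪ t', ?_, ?_⟩
      · push_cast
        exact Set.union_subset ht ht'
      · rw [Finset.sup_union, Finset.sup_eq_union]
    · intro A hA
      exact ⟨{A}, by simpa using hA, by simp⟩
  · rintro ⟨t, ht, rfl⟩ T hT
    obtain ⟨⟨hbot, hclosed⟩, h𝒜⟩ := hT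
    induction t using Finset.induction_on with
    | empty => simpa using hbot
    | @insert a s hnotmem ih =>
      rw [Finset.coe_insert, Set.insert_subset_iff] at ht
      rw [Finset.sup_insert]
      exact hclosed a (h𝒜 ht.1) (s.sup id) (ih ht.2)

lemma compVerts_quark {S : Set (Finset ℕ)} {C : (quarkicGraph S).ConnectedComponent}
    {A : Finset ℕ} (h : A ∈ compVerts S C) : IsQuark S A := by
  obtain ⟨v, -, rfl⟩ := h; exact v.2

/-- Two quarks with a common element lie in the same component of the quarkic graph. -/
lemma same_component {S : Set (Finset ℕ)} {A B : Finset ℕ} (hA : IsQuark S A)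
    (hB : IsQuark S B) {x : ℕ} (hxA : x ∈ A) (hxB : x ∈ B) :
    (quarkicGraph S).connectedComponentMk ⟨A, hA⟩ =
      (quarkicGraph S).connectedComponentMk ⟨B, hB⟩ := by
  by_cases hAB : A = B
  · subst hAB; rfl
  · apply SimpleGraph.ConnectedComponent.sound
    apply SimpleGraph.Adj.reachable
    rw [quarkicGraph, SimpleGraph.fromRel_adj]
    exact ⟨fun h => hAB (congrArg Subtype.val h),
      Or.inl ⟨x, Finset.mem_inter.2 ⟨hxA, hxB⟩⟩⟩

/-- The quarks of `⟨V(C)⟩` are exactly the elements of `V(C)`. -/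
lemma quark_genBSL_iff {S : Set (Finset ℕ)} {C : (quarkicGraph S).ConnectedComponent}
    {A : Finset ℕ} : IsQuark (genBSL (compVerts S C)) A ↔ A ∈ compVerts S C := by
  constructor
  · rintro ⟨hAmem, hAne, hmin⟩
    obtain ⟨t, ht, rfl⟩ := (genBSL_mem_iff _ _).1 hAmem
    have htne : t.Nonempty := by
      rcases t.eq_empty_or_nonempty with h | h
      · simp [h] at hAne
      · exact h
    obtain ⟨Q, hQ⟩ := htne
    have hQV : Q ∈ compVerts S C := ht hQ
    have hQq : IsQuark S Q := compVerts_quark hQV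
    have hQsub : Q ⊆ t.sup id := Finset.le_sup (f := id) hQ
    have : Q = t.sup id := by
      by_contra hne
      exact hmin Q (subset_genBSL _ hQV) hQq.2.1 (Finset.ssubset_iff_subset_ne.2 ⟨hQsub, hne⟩)
    rwa [← this]
  · intro hAV
    have hAq : IsQuark S A := compVerts_quark hAV
    refine ⟨subset_genBSL _ hAV, hAq.2.1, ?_⟩
    intro B hB hBne hBA
    obtain ⟨t, ht, rfl⟩ := (genBSL_mem_iff _ _).1 hB
    have htne : t.Nonempty := by
      rcases t.eq_empty_or_nonempty with h | h
      · simp [h] at hBne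
      · exact h
    obtain ⟨Q, hQ⟩ := htne
    have hQq : IsQuark S Q := compVerts_quark (ht hQ)
    have hQsub : Q ⊆ t.sup id := Finset.le_sup (f := id) hQ
    exact hAq.2.2 Q hQq.1 hQq.2.1 (lt_of_le_of_lt hQsub hBA)

/-- A factorization in `⟨V(C)⟩` is a factorization in `S`. -/
lemma fact_gen_to_fact {S : Set (Finset ℕ)} {C : (quarkicGraph S).ConnectedComponent}
    {X : Finset ℕ} {z : Finset (Finset ℕ)}
    (hz : z ∈ Factorizations (genBSL (compVerts S C)) X) : z ∈ Factorizations S X := by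
  obtain ⟨hq, hsup, hirr⟩ := hz
  exact ⟨fun A hA => compVerts_quark (quark_genBSL_iff.1 (hq A hA)), hsup, hirr⟩

/-- The part of a factorization living in a single component is a factorization of
its union in `⟨V(C)⟩`. -/
lemma filter_fact {S : Set (Finset ℕ)} {X : Finset ℕ} {z : Finset (Finset ℕ)}
    (hz : z ∈ Factorizations S X) (C : (quarkicGraph S).ConnectedComponent)
    [DecidablePred (· ∈ compVerts S C)] :
    z.filter (· ∈ compVerts S C) ∈
      Factorizations (genBSL (compVerts S C)) ((z.filter (· ∈ compVerts S C)).sup id) := by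
  obtain ⟨hq, hsup, hirr⟩ := hz
  refine ⟨fun A hA => quark_genBSL_iff.2 (Finset.mem_filter.1 hA).2, rfl, ?_⟩
  intro w hw hwsup
  obtain ⟨A, hAz, hAw⟩ := Finset.exists_of_ssubset hw
  have hAzf := Finset.mem_filter.1 hAz
  refine hirr ((z.filter fun a => ¬ a ∈ compVerts S C) ∪ w) ?_ ?_
  · rw [Finset.ssubset_iff_of_subset]
    · exact ⟨A, hAzf.1, by
        simp only [Finset.mem_union, Finset.mem_filter]
        push_neg
        exact ⟨fun _ => by simpa using hAzf.2, hAw⟩⟩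
    · exact Finset.union_subset (Finset.filter_subset _ _)
        (hw.1.trans (Finset.filter_subset _ _))
  · rw [Finset.sup_union, hwsup, ← Finset.sup_union,
      Finset.union_comm, Finset.filter_union_filter_not_eq]
    exact hsup

/-- Two factorizations of the same element have the same union on each component. -/
lemma filter_sup_eq {S : Set (Finset ℕ)} {X : Finset ℕ} {z z' : Finset (Finset ℕ)}
    (hz : z ∈ Factorizations S X) (hz' : z' ∈ Factorizations S X)
    (C : (quarkicGraph S).ConnectedComponent) [DecidablePred (· ∈ compVerts S C)] :
    (z.filter (· ∈ compVerts S C)).sup id = (z'.filter (· ∈ compVerts S C)).sup id := by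
  have key : ∀ z z' : Finset (Finset ℕ), z ∈ Factorizations S X → z' ∈ Factorizations S X →
      (z.filter (· ∈ compVerts S C)).sup id ⊆ (z'.filter (· ∈ compVerts S C)).sup id := by
    intro z z' hz hz'
    intro x hx
    obtain ⟨A, hA, hxA⟩ := Finset.mem_sup.1 hx
    have hAzf := Finset.mem_filter.1 hA
    have hxX : x ∈ X := by
      rw [← hz.2.1]; exact Finset.mem_sup.2 ⟨A, hAzf.1, hxA⟩
    obtain ⟨B, hBz', hxB⟩ := Finset.mem_sup.1 (hz'.2.1 ▸ hxX : x ∈ z'.sup id)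
    have hAq : IsQuark S A := hz.1 A hAzf.1
    have hBq : IsQuark S B := hz'.1 B hBz'
    obtain ⟨hAq', hAC⟩ := mem_compVerts_iff.1 hAzf.2
    have hBV : B ∈ compVerts S C := mem_compVerts_iff.2 ⟨hBq, by
      rw [same_component hBq hAq' hxB hxA]; exact hAC⟩
    exact Finset.mem_sup.2 ⟨B, Finset.mem_filter.2 ⟨hBz', hBV⟩, hxB⟩
  exact subset_antisymm (key z z' hz hz') (key z' z hz' hz)

end Aux

/-- A factorizable Boolean sublattice `S` is a UFS iff `⟨V(C)⟩` is a UFS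
for every connected component `C` of the quarkic graph of `S`. -/
theorem stmt_5 (S : Set (Finset ℕ)) (hS : IsBSL S) (hfac : Factorizable S) :
    IsUFS S ↔
      ∀ C : (quarkicGraph S).ConnectedComponent, IsUFS (genBSL (compVerts S C)) := by
  classical
  constructor
  · -- S UFS ⇒ each ⟨V(C)⟩ UFS
    intro hUFS C X hX hXne
    have hVS : compVerts S C ⊆ S := fun A hA => (compVerts_quark hA).1
    have hXS : X ∈ S := genBSL_subset hS hVS hX
    -- existence of a factorization in ⟨V(C)⟩
    obtain ⟨t, htV, htsup⟩ := (genBSL_mem_iff _ _).1 hX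
    have hPne : (t.powerset.filter fun w => w.sup id = X).Nonempty :=
      ⟨t, Finset.mem_filter.2 ⟨Finset.mem_powerset.2 (subset_refl t), htsup⟩⟩
    obtain ⟨w, hwP, hwmin⟩ := Finset.exists_min_image _ Finset.card hPne
    have hwP' := Finset.mem_filter.1 hwP
    have hwt : w ⊆ t := Finset.mem_powerset.1 hwP'.1
    have hwfact : w ∈ Factorizations (genBSL (compVerts S C)) X := by
      refine ⟨fun A hA => quark_genBSL_iff.2 (htV (hwt hA)), hwP'.2, ?_⟩
      intro w' hw' hw'sup
      have : w ∈ t.powerset.filter fun w => w.sup id = X := hwP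
      have hw'P : w' ∈ t.powerset.filter fun w => w.sup id = X :=
        Finset.mem_filter.2 ⟨Finset.mem_powerset.2 ((hw'.1).trans hwt), hw'sup⟩
      exact absurd (hwmin w' hw'P) (not_le.2 (Finset.card_lt_card hw'))
    obtain ⟨zu, hzu, huniq⟩ := hUFS X hXS hXne
    refine ⟨w, hwfact, fun z hz => ?_⟩
    rw [huniq z (fact_gen_to_fact hz), ← huniq w (fact_gen_to_fact hwfact)]
  · -- each ⟨V(C)⟩ UFS ⇒ S UFS
    intro hcomp X hX hXne
    obtain ⟨z0, hz0⟩ := hfac X hX hXne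
    have key : ∀ z ∈ Factorizations S X, ∀ z' ∈ Factorizations S X, z ⊆ z' := by
      intro z hz z' hz' A hA
      have hAq : IsQuark S A := hz.1 A hA
      set C := (quarkicGraph S).connectedComponentMk ⟨A, hAq⟩ with hC
      have hAV : A ∈ compVerts S C := mem_compVerts_iff.2 ⟨hAq, rfl⟩
      have hAzC : A ∈ z.filter (· ∈ compVerts S C) := Finset.mem_filter.2 ⟨hA, hAV⟩
      set Y := (z.filter (· ∈ compVerts S C)).sup id with hY
      have hYsub : A ⊆ Y := Finset.le_sup (f := id) hAzC
      have hYne : Y ≠ ∅ := fun h => hAq.2.1 (Finset.subset_empty.1 (h ▸ hYsub))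
      have hYgen : Y ∈ genBSL (compVerts S C) :=
        (genBSL_mem_iff _ _).2 ⟨z.filter (· ∈ compVerts S C), by
          intro a ha
          exact (Finset.mem_filter.1 (by exact_mod_cast ha)).2, rfl⟩
      have hzCfact := filter_fact hz C
      have hz'Cfact := filter_fact hz' C
      rw [← filter_sup_eq hz hz' C] at hz'Cfact
      obtain ⟨zu, hzu, huniq⟩ := hcomp C Y hYgen hYne
      have : z.filter (· ∈ compVerts S C) = z'.filter (· ∈ compVerts S C) := by
        rw [huniq _ hzCfact, huniq _ hz'Cfact]
      have hAz'C : A ∈ z'.filter (· ∈ compVerts S C) := this ▸ hAzC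
      exact (Finset.mem_filter.1 hAz'C).1
    refine ⟨z0, hz0, fun z hz => subset_antisymm (key z hz z0 hz0) (key z0 hz0 z hz)⟩
end

section
/- Let S be a factorizable Boolean sublattice. If the excess quarks of S are pairwise disjoint (any two distinct excess quarks have empty intersection), then S is a UFS. -/
open scoped ENNReal

/-- Every member of a factorization has a private element. -/
lemma fact_private {S : Set (Finset ℕ)} {X : Finset ℕ} {z : Finset (Finset ℕ)}
    (hz : IsFactorization S X z) {A : Finset ℕ} (hA : A ∈ z) :
    ∃ j ∈ A, ∀ C ∈ z, j ∈ C → C = A := by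
  obtain ⟨-, hsup, hmin⟩ := hz
  have hsub : z.erase A ⊂ z := Finset.erase_ssubset hA
  have hne := hmin _ hsub
  have hle : (z.erase A).sup id ⊆ z.sup id := Finset.sup_mono (Finset.erase_subset _ _)
  rw [hsup] at hle
  have hns : ¬ X ⊆ (z.erase A).sup id := fun hxs => hne (Finset.Subset.antisymm hle hxs)
  obtain ⟨j, hjX, hjn⟩ := Finset.not_subset.mp hns
  rw [← hsup] at hjX
  obtain ⟨C, hC, hjC⟩ := Finset.mem_sup.mp hjX
  have hCA : C = A := by
    by_contra hCA
    exact hjn (Finset.mem_sup.mpr ⟨C, Finset.mem_erase.mpr ⟨hCA, hC⟩, hjC⟩)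
  subst hCA
  refine ⟨j, hjC, fun C' hC' hjC' => ?_⟩
  by_contra h'
  exact hjn (Finset.mem_sup.mpr ⟨C', Finset.mem_erase.mpr ⟨h', hC'⟩, hjC'⟩)

/-- A member of one factorization not belonging to another factorization of the same
element is an excess quark. -/
lemma fact_excess {S : Set (Finset ℕ)} {X : Finset ℕ} {z z' : Finset (Finset ℕ)}
    (hz : IsFactorization S X z) (hz' : IsFactorization S X z')
    {A : Finset ℕ} (hA : A ∈ z) (hA' : A ∉ z') : IsExcessQuark S A := by
  refine ⟨hz.1 A hA, fun k hk => ?_⟩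
  have hkX : k ∈ X := by
    rw [← hz.2.1]
    exact Finset.mem_sup.mpr ⟨A, hA, hk⟩
  rw [← hz'.2.1] at hkX
  obtain ⟨B, hB, hkB⟩ := Finset.mem_sup.mp hkX
  exact ⟨B, hz'.1 B hB, fun hBA => hA' (hBA ▸ hB), hkB⟩

/-- If the excess quarks of a factorizable Boolean sublattice `S` are
pairwise disjoint, then `S` is a UFS. -/
theorem stmt_7 (S : Set (Finset ℕ)) (hS : IsBSL S) (hfac : Factorizable S)
    (h : ∀ A B : Finset ℕ, IsExcessQuark S A → IsExcessQuark S B → A ≠ B →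
      Disjoint A B) :
    IsUFS S := by
  intro X hX hXne
  obtain ⟨z, hz⟩ := hfac X hX hXne
  refine ⟨z, hz, fun z' hz' => ?_⟩
  by_contra hne
  -- find A ∈ z' \ z
  obtain ⟨A, hAz', hAz⟩ : ∃ A ∈ z', A ∉ z := by
    by_contra hc
    push_neg at hc
    exact hz.2.2 z' (Finset.ssubset_iff_subset_ne.mpr ⟨hc, hne⟩) hz'.2.1
  obtain ⟨j, hjA, hpriv⟩ := fact_private hz' hAz'
  have hjX : j ∈ X := by
    rw [← hz'.2.1]
    exact Finset.mem_sup.mpr ⟨A, hAz', hjA⟩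
  rw [← hz.2.1] at hjX
  obtain ⟨B, hBz, hjB⟩ := Finset.mem_sup.mp hjX
  have hBA : B ≠ A := fun hBA => hAz (hBA ▸ hBz)
  have hBz' : B ∉ z' := fun hBz' => hBA (hpriv B hBz' hjB)
  have hAex : IsExcessQuark S A := fact_excess hz' hz hAz' hAz
  have hBex : IsExcessQuark S B := fact_excess hz hz' hBz hBz'
  exact Finset.disjoint_left.mp (h A B hAex hBex (Ne.symm hBA)) hjA hjB
end

section
/- Let S be a Boolean sublattice all of whose quarks have size exactly 2. If S is a UFS, then: (1) the pairing graph G_p(S) contains no cycle of length 3; and (2) G_p(S) contains no path of length 4 and no cycle of length 4. -/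
open scoped ENNReal

/-!
When every quark has at most two elements, a family `z` of quarks whose union `X` has at least
`2 * #z - 1` elements is automatically irredundant, since a proper subfamily covers at most
`2 * #z - 2` points; so `z` is a factorization of `X`. A triangle `a b c`, a path `u a b c v` and
a square `a b c d` in the pairing graph each carry two different such families with the same
union, namely `{ab, bc}` and `{ab, ca}`, `{ua, bc, cv}` and `{ua, ab, cv}`, and `{ab, cd}` and
`{bc, da}`, contradicting unique factorization.
-/

theorem Finset.card_sup_id_le_mul {α : Type*} [DecidableEq α] (z : Finset (Finset α)) (n : ℕ)
    (h : ∀ A ∈ z, A.card ≤ n) : (z.sup id).card ≤ z.card * n := by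
  rw [Finset.sup_eq_biUnion]
  exact Finset.card_biUnion_le_card_mul _ _ _ h

theorem Finset.pair_eq_pair_iff {α : Type*} [DecidableEq α] {a b c d : α} :
    ({a, b} : Finset α) = {c, d} ↔ a = c ∧ b = d ∨ a = d ∧ b = c := by
  rw [← Finset.coe_inj, Finset.coe_pair, Finset.coe_pair, Set.pair_eq_pair_iff]

section

variable {S : Set (Finset ℕ)}

theorem IsBSL.sup_mem_s8 (hS : IsBSL S) {z : Finset (Finset ℕ)} (h : ∀ A ∈ z, A ∈ S) :
    z.sup id ∈ S :=
  Finset.sup_induction hS.1 hS.2 h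

theorem isFactorization_of_card_le (hq : ∀ A, IsQuark S A → A.card ≤ 2) {X : Finset ℕ}
    {z : Finset (Finset ℕ)} (hz : ∀ A ∈ z, IsQuark S A) (hX : z.sup id = X)
    (hc : 2 * z.card ≤ X.card + 1) : IsFactorization S X z := by
  refine ⟨hz, hX, fun w hw hsup => ?_⟩
  have hlt := Finset.card_lt_card hw
  have hle := w.card_sup_id_le_mul 2 fun A hA => hq A (hz A (hw.subset hA))
  rw [hsup] at hle
  omega

theorem IsUFS.eq_of_sup_eq_of_card_le (hufs : IsUFS S) (hS : IsBSL S)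
    (hq : ∀ A, IsQuark S A → A.card ≤ 2) {X : Finset ℕ} {z₁ z₂ : Finset (Finset ℕ)}
    (h₁ : ∀ A ∈ z₁, IsQuark S A) (h₂ : ∀ A ∈ z₂, IsQuark S A)
    (hX₁ : z₁.sup id = X) (hX₂ : z₂.sup id = X)
    (hc₁ : 2 * z₁.card ≤ X.card + 1) (hc₂ : 2 * z₂.card ≤ X.card + 1) : z₁ = z₂ := by
  rcases X.eq_empty_or_nonempty with rfl | hX
  · simp only [Finset.card_empty] at hc₁ hc₂
    rw [Finset.card_eq_zero.mp (show z₁.card = 0 by omega),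
      Finset.card_eq_zero.mp (show z₂.card = 0 by omega)]
  · obtain ⟨z, -, hz⟩ := hufs X (hX₁ ▸ hS.sup_mem_s8 fun A hA => (h₁ A hA).1) hX.ne_empty
    exact (hz _ (isFactorization_of_card_le hq h₁ hX₁ hc₁)).trans
      (hz _ (isFactorization_of_card_le hq h₂ hX₂ hc₂)).symm

theorem pairingGraph_adj {a b : ℕ} : (pairingGraph S).Adj a b ↔ a ≠ b ∧ IsQuark S {a, b} := by
  rw [pairingGraph, SimpleGraph.fromRel_adj, Finset.pair_comm b a, or_self]

namespace IsUFS

variable (hufs : IsUFS S) (hS : IsBSL S) (hq : ∀ A, IsQuark S A → A.card ≤ 2)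
include hufs hS hq

theorem pairingGraph_no_triangle {a b c : ℕ} (hab : (pairingGraph S).Adj a b)
    (hbc : (pairingGraph S).Adj b c) (hca : (pairingGraph S).Adj c a) : False := by
  rw [pairingGraph_adj] at hab hbc hca
  have hX : ({a, b, c} : Finset ℕ).card = 3 :=
    Finset.card_eq_three.mpr ⟨a, b, c, hab.1, hca.1.symm, hbc.1, rfl⟩
  have hz := hufs.eq_of_sup_eq_of_card_le hS hq (X := {a, b, c}) (z₁ := {{a, b}, {b, c}})
    (z₂ := {{a, b}, {c, a}}) (by simp [hab.2, hbc.2]) (by simp [hab.2, hca.2])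
    (by ext; simp) (by ext; simp [or_comm, or_left_comm])
    (by grw [Finset.card_le_two]; omega) (by grw [Finset.card_le_two]; omega)
  have hmem : ({b, c} : Finset ℕ) ∈ ({{a, b}, {c, a}} : Finset (Finset ℕ)) := hz ▸ by simp
  grind [Finset.pair_eq_pair_iff]

theorem pairingGraph_no_path_four {u a b c v : ℕ} (hnd : [u, a, b, c, v].Nodup)
    (hua : (pairingGraph S).Adj u a) (hab : (pairingGraph S).Adj a b)
    (hbc : (pairingGraph S).Adj b c) (hcv : (pairingGraph S).Adj c v) : False := by
  rw [pairingGraph_adj] at hua hab hbc hcv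
  have hX : ({u, a, b, c, v} : Finset ℕ).card = 5 := by
    simpa using List.toFinset_card_of_nodup hnd
  have hz := hufs.eq_of_sup_eq_of_card_le hS hq (X := {u, a, b, c, v})
    (z₁ := {{u, a}, {b, c}, {c, v}}) (z₂ := {{u, a}, {a, b}, {c, v}})
    (by simp [hua.2, hbc.2, hcv.2]) (by simp [hua.2, hab.2, hcv.2])
    (by ext; simp [or_comm, or_left_comm]) (by ext; simp [or_comm, or_left_comm])
    (by grw [Finset.card_le_three]; omega) (by grw [Finset.card_le_three]; omega)
  have hmem : ({b, c} : Finset ℕ) ∈ ({{u, a}, {a, b}, {c, v}} : Finset (Finset ℕ)) :=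
    hz ▸ by simp
  grind [Finset.pair_eq_pair_iff, List.nodup_cons]

theorem pairingGraph_no_cycle_four {a b c d : ℕ} (hnd : [a, b, c, d].Nodup)
    (hab : (pairingGraph S).Adj a b) (hbc : (pairingGraph S).Adj b c)
    (hcd : (pairingGraph S).Adj c d) (hda : (pairingGraph S).Adj d a) : False := by
  rw [pairingGraph_adj] at hab hbc hcd hda
  have hX : ({a, b, c, d} : Finset ℕ).card = 4 := by
    simpa using List.toFinset_card_of_nodup hnd
  have hz := hufs.eq_of_sup_eq_of_card_le hS hq (X := {a, b, c, d}) (z₁ := {{a, b}, {c, d}})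
    (z₂ := {{b, c}, {d, a}}) (by simp [hab.2, hcd.2]) (by simp [hbc.2, hda.2])
    (by ext; simp [or_left_comm]) (by ext; simp [or_comm, or_left_comm])
    (by grw [Finset.card_le_two]; omega) (by grw [Finset.card_le_two]; omega)
  have hmem : ({a, b} : Finset ℕ) ∈ ({{b, c}, {d, a}} : Finset (Finset ℕ)) := hz ▸ by simp
  grind [Finset.pair_eq_pair_iff, List.nodup_cons]

end IsUFS

end

/-- If a Boolean sublattice `S` all of whose quarks have size exactly 2
is a UFS, then its pairing graph contains no cycle of length 3, no path of length 4,
and no cycle of length 4. -/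
theorem stmt_8 (S : Set (Finset ℕ)) (hS : IsBSL S)
    (hq : ∀ A : Finset ℕ, IsQuark S A → A.card = 2) (hufs : IsUFS S) :
    (¬ ∃ (v : ℕ) (c : (pairingGraph S).Walk v v), c.IsCycle ∧ c.length = 3) ∧
    (¬ ∃ (u v : ℕ) (p : (pairingGraph S).Walk u v), p.IsPath ∧ p.length = 4) ∧
    (¬ ∃ (v : ℕ) (c : (pairingGraph S).Walk v v), c.IsCycle ∧ c.length = 4) := by
  have hq₂ : ∀ A, IsQuark S A → A.card ≤ 2 := fun A hA => (hq A hA).le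
  refine ⟨?_, ?_, ?_⟩
  · rintro ⟨v, (_ | ⟨h₁, _ | ⟨h₂, _ | ⟨h₃, _ | ⟨_, _⟩⟩⟩⟩), -, hlen⟩ <;> simp at hlen
    exact hufs.pairingGraph_no_triangle hS hq₂ h₁ h₂ h₃
  · rintro ⟨u, v, (_ | ⟨h₁, _ | ⟨h₂, _ | ⟨h₃, _ | ⟨h₄, _ | ⟨_, _⟩⟩⟩⟩⟩), hp, hlen⟩ <;>
      simp at hlen
    exact hufs.pairingGraph_no_path_four hS hq₂ (by simpa using hp.support_nodup) h₁ h₂ h₃ h₄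
  · rintro ⟨v, (_ | ⟨h₁, _ | ⟨h₂, _ | ⟨h₃, _ | ⟨h₄, _ | ⟨_, _⟩⟩⟩⟩⟩), hc, hlen⟩ <;> simp at hlen
    exact hufs.pairingGraph_no_cycle_four hS hq₂ (by simpa using hc.support_nodup) h₂ h₃ h₄ h₁
end

section
/- Let S be a factorizable Boolean sublattice. Then S is an HFS if and only if the Boolean sublattice ⟨A(S) \ A_I(S)⟩ generated by the non-isolated quarks of S is an HFS. -/
open scoped ENNReal

open scoped Classical

lemma aux_sup_mem_bsl {S : Set (Finset ℕ)} (hS : IsBSL S) (z : Finset (Finset ℕ))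
    (hz : ∀ A ∈ z, A ∈ S) : z.sup id ∈ S := by
  induction z using Finset.induction_on with
  | empty => simpa using hS.1
  | @insert A s _ ih =>
    rw [Finset.sup_insert]
    exact hS.2 A (hz A (Finset.mem_insert_self _ _)) _
      (ih fun B hB => hz B (Finset.mem_insert_of_mem hB))

lemma aux_mem_genBSL_iff (𝒜 : Set (Finset ℕ)) (X : Finset ℕ) :
    X ∈ genBSL 𝒜 ↔ ∃ z : Finset (Finset ℕ), (∀ A ∈ z, A ∈ 𝒜) ∧ z.sup id = X := by
  constructor
  · intro hX
    have h1 : IsBSL {Y : Finset ℕ |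
        ∃ z : Finset (Finset ℕ), (∀ A ∈ z, A ∈ 𝒜) ∧ z.sup id = Y} := by
      constructor
      · exact ⟨∅, by simp, by simp⟩
      · rintro A ⟨za, hza, rfl⟩ B ⟨zb, hzb, rfl⟩
        refine ⟨za ∪ zb, ?_, ?_⟩
        · intro C hC
          rcases Finset.mem_union.mp hC with h | h
          · exact hza C h
          · exact hzb C h
        · simp [Finset.sup_union, Finset.sup_eq_union]
    have h2 : 𝒜 ⊆ {Y : Finset ℕ |
        ∃ z : Finset (Finset ℕ), (∀ A ∈ z, A ∈ 𝒜) ∧ z.sup id = Y} := by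
      intro A hA
      exact ⟨{A}, by simp [hA], by simp⟩
    exact Set.mem_sInter.mp hX _ ⟨h1, h2⟩
  · rintro ⟨z, hz, rfl⟩
    exact Set.mem_sInter.mpr fun T hT => aux_sup_mem_bsl hT.1 z fun A hA => hT.2 (hz A hA)

lemma aux_quark_gen_iff {S 𝒜 : Set (Finset ℕ)} (h𝒜 : ∀ A ∈ 𝒜, IsQuark S A)
    (A : Finset ℕ) : IsQuark (genBSL 𝒜) A ↔ A ∈ 𝒜 := by
  constructor
  · rintro ⟨hAT, hAne, hmin⟩
    obtain ⟨z, hz, rfl⟩ := (aux_mem_genBSL_iff 𝒜 _).mp hAT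
    obtain ⟨x, hx⟩ := Finset.nonempty_iff_ne_empty.mpr hAne
    obtain ⟨B, hBz, hxB⟩ := Finset.mem_sup.mp hx
    have hB𝒜 := hz B hBz
    have hBsub : B ⊆ z.sup id := Finset.le_sup (f := id) hBz
    have hBT : B ∈ genBSL 𝒜 :=
      (aux_mem_genBSL_iff 𝒜 B).mpr ⟨{B}, by simp [hB𝒜], by simp⟩
    have hBne : B ≠ ∅ := (h𝒜 B hB𝒜).2.1
    have hBeq : B = z.sup id := by
      by_contra hne
      exact hmin B hBT hBne (lt_of_le_of_ne hBsub hne)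
    rwa [← hBeq]
  · intro hA
    have hq := h𝒜 A hA
    refine ⟨(aux_mem_genBSL_iff 𝒜 A).mpr ⟨{A}, by simp [hA], by simp⟩, hq.2.1, ?_⟩
    intro B hBT hBne hBA
    obtain ⟨z, hz, rfl⟩ := (aux_mem_genBSL_iff 𝒜 _).mp hBT
    obtain ⟨x, hx⟩ := Finset.nonempty_iff_ne_empty.mpr hBne
    obtain ⟨Q, hQz, hxQ⟩ := Finset.mem_sup.mp hx
    have hQsub : Q ⊆ z.sup id := Finset.le_sup (f := id) hQz
    exact hq.2.2 Q (h𝒜 Q (hz Q hQz)).1 (h𝒜 Q (hz Q hQz)).2.1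
      (lt_of_le_of_lt hQsub hBA)

lemma aux_iso_mem {S : Set (Finset ℕ)} {X : Finset ℕ} {z : Finset (Finset ℕ)}
    (hz : IsFactorization S X z) {Q : Finset ℕ} (hQ : IsIsolatedQuark S Q)
    (hQX : Q ⊆ X) : Q ∈ z := by
  obtain ⟨x, hx⟩ := Finset.nonempty_iff_ne_empty.mpr hQ.1.2.1
  have hxX : x ∈ X := hQX hx
  rw [← hz.2.1] at hxX
  obtain ⟨B, hBz, hxB⟩ := Finset.mem_sup.mp hxX
  rcases eq_or_ne B Q with rfl | hne
  · exact hBz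
  · exact absurd hxB (Finset.disjoint_left.mp (hQ.2 B (hz.1 B hBz) hne) hx)

lemma aux_filter_sup {S : Set (Finset ℕ)} {X : Finset ℕ} {z : Finset (Finset ℕ)}
    (hz : IsFactorization S X z) :
    (z.filter fun A => ¬ IsIsolatedQuark S A).sup id
      = X \ (z.filter fun A => IsIsolatedQuark S A).sup id := by
  ext x
  simp only [Finset.mem_sup, Finset.mem_filter, Finset.mem_sdiff, id_eq]
  constructor
  · rintro ⟨A, ⟨hAz, hAniso⟩, hxA⟩
    refine ⟨?_, ?_⟩
    · rw [← hz.2.1]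
      exact Finset.mem_sup.mpr ⟨A, hAz, hxA⟩
    · rintro ⟨Q, ⟨hQz, hQiso⟩, hxQ⟩
      have hne : A ≠ Q := fun h => hAniso (h ▸ hQiso)
      exact absurd hxA (Finset.disjoint_left.mp (hQiso.2 A (hz.1 A hAz) hne) hxQ)
  · rintro ⟨hxX, hno⟩
    rw [← hz.2.1] at hxX
    obtain ⟨A, hAz, hxA⟩ := Finset.mem_sup.mp hxX
    exact ⟨A, ⟨hAz, fun hiso => hno ⟨A, ⟨hAz, hiso⟩, hxA⟩⟩, hxA⟩

/-- A factorizable Boolean sublattice `S` is an HFS iff the Boolean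
sublattice generated by its non-isolated quarks is an HFS. -/
theorem stmt_10 (S : Set (Finset ℕ)) (hS : IsBSL S) (hfac : Factorizable S) :
    IsHFS S ↔ IsHFS (genBSL {A | IsQuark S A ∧ ¬ IsIsolatedQuark S A}) := by
  set 𝒜 : Set (Finset ℕ) := {A | IsQuark S A ∧ ¬ IsIsolatedQuark S A} with h𝒜def
  have h𝒜q : ∀ A ∈ 𝒜, IsQuark S A := fun A hA => hA.1
  have hquark : ∀ A, IsQuark (genBSL 𝒜) A ↔ A ∈ 𝒜 := aux_quark_gen_iff h𝒜q
  constructor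
  · -- S HFS → generated HFS
    intro hHFS Y hY hYne
    obtain ⟨w, hw, rfl⟩ := (aux_mem_genBSL_iff 𝒜 Y).mp hY
    have hYS : w.sup id ∈ S := aux_sup_mem_bsl hS w fun A hA => (h𝒜q A (hw A hA)).1
    have hnoiso : ∀ z ∈ Factorizations S (w.sup id), ∀ A ∈ z,
        ¬ IsIsolatedQuark S A := by
      intro z hz A hAz hiso
      obtain ⟨x, hx⟩ := Finset.nonempty_iff_ne_empty.mpr hiso.1.2.1
      have hxY : x ∈ w.sup id := by
        rw [← hz.2.1]
        exact Finset.mem_sup.mpr ⟨A, hAz, hx⟩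
      obtain ⟨B, hBw, hxB⟩ := Finset.mem_sup.mp hxY
      have hB := hw B hBw
      have hne : B ≠ A := fun h => hB.2 (h ▸ hiso)
      exact absurd hxB (Finset.disjoint_left.mp (hiso.2 B hB.1 hne) hx)
    have hTfac : ∀ z, z ∈ Factorizations (genBSL 𝒜) (w.sup id) ↔
        z ∈ Factorizations S (w.sup id) := by
      intro z
      constructor
      · rintro ⟨hq, hsup, hmin⟩
        exact ⟨fun A hA => ((hquark A).mp (hq A hA)).1, hsup, hmin⟩
      · rintro h
        exact ⟨fun A hA => (hquark A).mpr ⟨h.1 A hA, hnoiso z h A hA⟩, h.2.1, h.2.2⟩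
    obtain ⟨z₀, hz₀⟩ := hfac _ hYS hYne
    refine ⟨⟨z₀, (hTfac z₀).mpr hz₀⟩, ?_⟩
    intro z hz z' hz'
    exact (hHFS _ hYS hYne).2 z ((hTfac z).mp hz) z' ((hTfac z').mp hz')
  · -- generated HFS → S HFS
    intro hHFS X hX hXne
    refine ⟨hfac X hX hXne, ?_⟩
    intro z hz z' hz'
    have hmemiff : ∀ u ∈ Factorizations S X, ∀ Q,
        Q ∈ u.filter (fun A => IsIsolatedQuark S A) ↔
          (IsIsolatedQuark S Q ∧ Q ⊆ X) := by
      intro u hu Q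
      simp only [Finset.mem_filter]
      constructor
      · rintro ⟨hQu, hiso⟩
        refine ⟨hiso, ?_⟩
        rw [← hu.2.1]
        exact Finset.le_sup (f := id) hQu
      · rintro ⟨hiso, hQX⟩
        exact ⟨aux_iso_mem hu hiso hQX, hiso⟩
    have hIeq : z.filter (fun A => IsIsolatedQuark S A)
        = z'.filter (fun A => IsIsolatedQuark S A) := by
      ext Q
      rw [hmemiff z hz Q, hmemiff z' hz' Q]
    have hYz : (z.filter fun A => ¬ IsIsolatedQuark S A).sup id
        = X \ (z.filter (fun A => IsIsolatedQuark S A)).sup id := aux_filter_sup hz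
    have hYz' : (z'.filter fun A => ¬ IsIsolatedQuark S A).sup id
        = X \ (z.filter (fun A => IsIsolatedQuark S A)).sup id := by
      rw [aux_filter_sup hz', ← hIeq]
    have hcard : ∀ u : Finset (Finset ℕ),
        (u.filter (fun A => IsIsolatedQuark S A)).card
          + (u.filter (fun A => ¬ IsIsolatedQuark S A)).card = u.card := fun u =>
      Finset.card_filter_add_card_filter_not (fun A => IsIsolatedQuark S A)
    rcases eq_or_ne (X \ (z.filter (fun A => IsIsolatedQuark S A)).sup id) ∅
      with hYe | hYne
    · -- no non-isolated part
      have hNe : ∀ u ∈ Factorizations S X,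
          (u.filter fun A => ¬ IsIsolatedQuark S A).sup id
            = X \ (z.filter (fun A => IsIsolatedQuark S A)).sup id →
          (u.filter fun A => ¬ IsIsolatedQuark S A) = ∅ := by
        intro u hu hsup
        rw [Finset.eq_empty_iff_forall_notMem]
        intro A hA
        have hAq := hu.1 A (Finset.mem_filter.mp hA).1
        have hsub : A ⊆ (u.filter fun A => ¬ IsIsolatedQuark S A).sup id :=
          Finset.le_sup (f := id) hA
        rw [hsup, hYe] at hsub
        exact hAq.2.1 (Finset.subset_empty.mp hsub)
      have h1 := hcard z
      have h2 := hcard z'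
      rw [hNe z hz hYz] at h1
      rw [hNe z' hz' hYz'] at h2
      simp only [Finset.card_empty, add_zero] at h1 h2
      rw [← h1, ← h2, hIeq]
    · -- non-isolated parts are factorizations of Y in the generated lattice
      have hIX : (z.filter (fun A => IsIsolatedQuark S A)).sup id ⊆ X := by
        intro x hx
        obtain ⟨A, hA, hxA⟩ := Finset.mem_sup.mp hx
        rw [← hz.2.1]
        exact Finset.mem_sup.mpr ⟨A, Finset.filter_subset _ _ hA, hxA⟩
      have hfactY : ∀ u ∈ Factorizations S X,
          (u.filter fun A => ¬ IsIsolatedQuark S A).sup id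
            = X \ (z.filter (fun A => IsIsolatedQuark S A)).sup id →
          u.filter (fun A => IsIsolatedQuark S A)
            = z.filter (fun A => IsIsolatedQuark S A) →
          (u.filter fun A => ¬ IsIsolatedQuark S A)
            ∈ Factorizations (genBSL 𝒜)
              (X \ (z.filter (fun A => IsIsolatedQuark S A)).sup id) := by
        intro u hu hsup hI
        refine ⟨?_, hsup, ?_⟩
        · intro A hA
          have hA' := Finset.mem_filter.mp hA
          exact (hquark A).mpr ⟨hu.1 A hA'.1, hA'.2⟩
        · intro v hv hvsup
          have hsubz : z.filter (fun A => IsIsolatedQuark S A) ∪ v ⊆ u := by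
            rw [← hI]
            refine Finset.union_subset (Finset.filter_subset _ _) ?_
            exact hv.subset.trans (Finset.filter_subset _ _)
          obtain ⟨A, hAu, hAv⟩ := Finset.exists_of_ssubset hv
          have hAmem := Finset.mem_filter.mp hAu
          have hAnI : A ∉ z.filter (fun A => IsIsolatedQuark S A) ∪ v := by
            rw [Finset.mem_union]
            rintro (h | h)
            · rw [← hI] at h
              exact hAmem.2 (Finset.mem_filter.mp h).2
            · exact hAv h
          have hss : z.filter (fun A => IsIsolatedQuark S A) ∪ v ⊂ u :=
            Finset.ssubset_iff_of_subset hsubz |>.mpr ⟨A, hAmem.1, hAnI⟩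
          exact hu.2.2 _ hss (by
            rw [Finset.sup_union, hvsup, Finset.sup_eq_union,
              Finset.union_sdiff_of_subset hIX])
      have hzN := hfactY z hz hYz rfl
      have hz'N := hfactY z' hz' hYz' hIeq.symm
      have hYT : X \ (z.filter (fun A => IsIsolatedQuark S A)).sup id ∈ genBSL 𝒜 := by
        refine (aux_mem_genBSL_iff 𝒜 _).mpr
          ⟨z.filter (fun A => ¬ IsIsolatedQuark S A), ?_, hYz⟩
        intro A hA
        have hA' := Finset.mem_filter.mp hA
        exact ⟨hz.1 A hA'.1, hA'.2⟩
      have hNcard := (hHFS _ hYT hYne).2 _ hzN _ hz'N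
      have h1 := hcard z
      have h2 := hcard z'
      rw [← h1, ← h2, hIeq, hNcard]
end
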